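/- arXiv:2412.16621 — 3 statements merged into one kernel-verified Lean document; each statement's English description precedes it below -/
import Mathlib

section
/- For any integers a₁, a₂ ≥ 2 with a₁ ≠ a₂, the real numbers log(a₁(a₁−1)) and log(a₂(a₂−1)) are linearly independent over ℤ; that is, for integers m, n, if m·log(a₁(a₁−1)) + n·log(a₂(a₂−1)) = 0 then m = n = 0. -/
/-!
Write `x = a₁(a₁ - 1)` and `y = a₂(a₂ - 1)`. A relation `m log x + n log y = 0` gives
`x ^ |m| = y ^ |n|`, and an equality `x ^ M = y ^ N` with `M ≠ 0` makes `x` and `y` powers of a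
common base. So it suffices that `a(a - 1)` is not a perfect power: its coprime factors `a` and
`a - 1` would both be `k`-th powers, and two positive `k`-th powers differ by more than `1`
once `k ≥ 2`.
-/

namespace Nat

theorem pow_ne_pow_add_one {u v k : ℕ} (hv : v ≠ 0) (hk : 2 ≤ k) : u ^ k ≠ v ^ k + 1 := by
  intro h
  have hvu : v < u := lt_of_pow_lt_pow_left₀ k (zero_le _) (by omega)
  obtain ⟨j, rfl⟩ : ∃ j, k = j + 1 := ⟨k - 1, by omega⟩
  have hj : v + 1 ≤ (v + 1) ^ j := Nat.le_self_pow (by omega) _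
  have hvj : v ^ j * v ≤ (v + 1) ^ j * v :=
    Nat.mul_le_mul_right v (Nat.pow_le_pow_left (by omega) j)
  have huv : (v + 1) ^ (j + 1) ≤ u ^ (j + 1) := Nat.pow_le_pow_left hvu (j + 1)
  rw [pow_succ, pow_succ, mul_add_one] at huv
  rw [pow_succ, pow_succ] at h
  linarith [Nat.one_le_iff_ne_zero.mpr hv]

theorem eq_one_of_mul_sub_one_eq_pow {a z k : ℕ} (ha : 2 ≤ a) (h : a * (a - 1) = z ^ k) :
    k = 1 := by
  obtain ⟨b, rfl⟩ : ∃ b, a = b + 1 := ⟨a - 1, by omega⟩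
  rw [Nat.add_sub_cancel] at h
  have hcop : Coprime (b + 1) b := by simp
  obtain ⟨u, hu⟩ := exists_eq_pow_of_mul_eq_pow (Nat.isUnit_iff.mpr hcop) h
  obtain ⟨v, hv⟩ :=
    exists_eq_pow_of_mul_eq_pow (Nat.isUnit_iff.mpr hcop.symm) ((mul_comm _ _).trans h)
  have hk : k ≠ 0 := by
    rintro rfl
    rw [pow_zero] at h
    nlinarith
  by_contra hk1
  have hv0 : v ≠ 0 := by
    rintro rfl
    rw [zero_pow hk] at hv
    omega
  exact pow_ne_pow_add_one hv0 (by omega) (hu.symm.trans (congrArg (· + 1) hv))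

theorem strictMonoOn_mul_sub_one : StrictMonoOn (fun a : ℕ ↦ a * (a - 1)) (Set.Ici 1) :=
  fun a ha b _ hab ↦ Nat.mul_lt_mul'' hab (by simp only [Set.mem_Ici] at ha; omega)

theorem eq_zero_of_pow_eq_pow_of_ne {x y M N : ℕ} (hx : ∀ z k, x = z ^ k → k = 1)
    (hy : ∀ z k, y = z ^ k → k = 1) (hne : x ≠ y) (h : x ^ M = y ^ N) : M = 0 ∧ N = 0 := by
  rcases eq_or_ne M 0 with rfl | hM
  · refine ⟨rfl, ?_⟩
    rcases Nat.pow_eq_one.mp h.symm with rfl | hN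
    · exact absurd (hy 1 0 rfl) zero_ne_one
    · exact hN
  obtain ⟨c, hxc, hyc⟩ := exists_eq_pow_of_pow_eq_pow (Or.inl hM) h
  rw [hx c _ hxc, pow_one] at hxc
  rw [hy c _ hyc, pow_one] at hyc
  exact absurd (hxc.trans hyc.symm) hne

end Nat

theorem Real.pow_natAbs_eq_pow_natAbs_of_mul_log_add_mul_log_eq_zero {x y : ℝ}
    (hx : 1 ≤ x) (hy : 1 ≤ y) {m n : ℤ} (h : m * log x + n * log y = 0) :
    x ^ m.natAbs = y ^ n.natAbs := by
  have habs : |(m : ℝ)| * log x = |(n : ℝ)| * log y := by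
    rw [← abs_of_nonneg (log_nonneg hx), ← abs_of_nonneg (log_nonneg hy), ← abs_mul, ← abs_mul,
      eq_neg_of_add_eq_zero_left h, abs_neg]
  apply log_injOn_pos (Set.mem_Ioi.mpr (by positivity)) (Set.mem_Ioi.mpr (by positivity))
  rw [log_pow, log_pow]
  push_cast [Nat.cast_natAbs]
  exact habs

theorem log_consecutive_products_linearIndependent
    (a₁ a₂ : ℕ) (h₁ : 2 ≤ a₁) (h₂ : 2 ≤ a₂) (hne : a₁ ≠ a₂)
    (m n : ℤ)
    (h : (m : ℝ) * Real.log ((a₁ : ℝ) * ((a₁ : ℝ) - 1))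
        + (n : ℝ) * Real.log ((a₂ : ℝ) * ((a₂ : ℝ) - 1)) = 0) :
    m = 0 ∧ n = 0 := by
  have hcast (a : ℕ) (ha : 2 ≤ a) : ((a * (a - 1) : ℕ) : ℝ) = a * (a - 1) := by
    rw [Nat.cast_mul, Nat.cast_sub (by omega), Nat.cast_one]
  have hone (a : ℕ) (ha : 2 ≤ a) : (1 : ℝ) ≤ ((a * (a - 1) : ℕ) : ℝ) :=
    Nat.one_le_cast.mpr (Nat.mul_pos (by omega) (by omega))
  rw [← hcast a₁ h₁, ← hcast a₂ h₂] at h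
  have hpow : (a₁ * (a₁ - 1)) ^ m.natAbs = (a₂ * (a₂ - 1)) ^ n.natAbs := by
    exact_mod_cast Real.pow_natAbs_eq_pow_natAbs_of_mul_log_add_mul_log_eq_zero
      (hone a₁ h₁) (hone a₂ h₂) h
  have hne' : a₁ * (a₁ - 1) ≠ a₂ * (a₂ - 1) := fun heq ↦ hne <|
    Nat.strictMonoOn_mul_sub_one.injOn (Set.mem_Ici.mpr (by omega)) (Set.mem_Ici.mpr (by omega)) heq
  obtain ⟨hm, hn⟩ := Nat.eq_zero_of_pow_eq_pow_of_ne
    (fun _ _ ↦ Nat.eq_one_of_mul_sub_one_eq_pow h₁) (fun _ _ ↦ Nat.eq_one_of_mul_sub_one_eq_pow h₂)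
    hne' hpow
  exact ⟨Int.natAbs_eq_zero.mp hm, Int.natAbs_eq_zero.mp hn⟩
end

section
/- Let r_j, r_k ∈ (0,1) and suppose θ := log r_j / log r_k is non-Liouville of degree l ≥ 2, i.e., there is c > 0 with |θ − p/q| ≥ c/q^l for all p ∈ ℤ, q ∈ ℕ. Let p_j, p_k > 0 and let λ be a probability measure on ℝ⁺ containing atoms of masses p_j and p_k at −log r_j and −log r_k respectively (plus possibly other nonnegative atoms). Then liminf_{|b|→∞} |b|^{2l−2}·|1 − ℒλ(ib)| > 0; that is, λ is (2l−2)-weakly diophantine. -/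
/-!
`ℒλ(ib)` is the characteristic function `charFun λ (-b)`, and the real part of `1 - ℒλ(ib)` is
`∫ (1 - cos bx) dλ ≥ p (1 - cos bt) ≥ 8 p ‖bt/2π‖²` for every atom `t` of mass `p`, where `‖·‖`
is the distance to the nearest integer. Put `t_k = -log r_k` and `t_j = θ t_k`. If `bt_j/2π` and
`bt_k/2π` are both within `δ` of integers `m` and `n`, then `|θ - m/n| ≤ (|θ| + 1) δ / n`, while
the non-Liouville bound gives `|θ - m/n| ≥ c / n^l` with `n ≍ |b|`. Hence `δ ≳ |b|^(1-l)` and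
`|1 - ℒλ(ib)| ≳ |b|^(2-2l)`.
-/

open MeasureTheory Real

lemma eight_mul_sq_sub_round_le_one_sub_cos (z : ℝ) :
    8 * (z - round z) ^ 2 ≤ 1 - cos (2 * π * z) := by
  have hδ : |2 * π * (z - round z)| ≤ π := by
    rw [abs_mul, abs_of_pos two_pi_pos]
    nlinarith [abs_sub_round z, pi_pos]
  have hcos : cos (2 * π * (z - round z)) = cos (2 * π * z) := by
    rw [mul_sub, mul_comm (2 * π) (round z : ℝ), cos_sub_int_mul_two_pi]
  calc 8 * (z - round z) ^ 2 = 2 / π ^ 2 * (2 * π * (z - round z)) ^ 2 := by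
        field_simp; ring
    _ ≤ 1 - cos (2 * π * z) := by linarith [hcos ▸ cos_le_one_sub_mul_cos_sq hδ]

lemma integrable_cos_mul (μ : Measure ℝ) [IsFiniteMeasure μ] (t : ℝ) :
    Integrable (fun x ↦ cos (t * x)) μ :=
  .of_bound (by fun_prop) 1 (ae_of_all _ fun x ↦ abs_cos_le_one _)

lemma re_charFun_real (μ : Measure ℝ) [IsFiniteMeasure μ] (t : ℝ) :
    (charFun μ t).re = ∫ x, cos (t * x) ∂μ := by
  have hint : Integrable (fun x : ℝ ↦ Complex.exp (↑(t * x) * Complex.I)) μ :=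
    .of_bound (by fun_prop) 1 (ae_of_all _ fun x ↦ (Complex.norm_exp_ofReal_mul_I _).le)
  rw [charFun_apply_real, ← RCLike.re_eq_complex_re, ← integral_re (by exact_mod_cast hint)]
  simp_rw [← Complex.ofReal_mul, RCLike.re_eq_complex_re, Complex.exp_ofReal_mul_I_re]

lemma norm_one_sub_charFun_abs (μ : Measure ℝ) (t : ℝ) :
    ‖1 - charFun μ |t|‖ = ‖1 - charFun μ t‖ := by
  rcases abs_choice t with h | h <;> rw [h]
  rw [charFun_neg, ← Complex.norm_conj, map_sub, map_one, Complex.conj_conj]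

lemma measureReal_singleton_mul_one_sub_cos_le (μ : Measure ℝ) [IsProbabilityMeasure μ]
    (t a : ℝ) : μ.real {a} * (1 - cos (t * a)) ≤ ‖1 - charFun μ t‖ := by
  have hint : Integrable (fun x ↦ 1 - cos (t * x)) μ :=
    (integrable_const 1).sub (integrable_cos_mul μ t)
  calc μ.real {a} * (1 - cos (t * a)) = ∫ x in {a}, 1 - cos (t * x) ∂μ :=
        (integral_singleton (fun x ↦ 1 - cos (t * x)) a).symm
    _ ≤ ∫ x, 1 - cos (t * x) ∂μ :=
        setIntegral_le_integral hint (ae_of_all _ fun x ↦ sub_nonneg.2 (cos_le_one _))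
    _ = (1 - charFun μ t).re := by
        rw [integral_sub (integrable_const 1) (integrable_cos_mul μ t), Complex.sub_re,
          re_charFun_real]
        simp
    _ ≤ ‖1 - charFun μ t‖ := Complex.re_le_norm _

lemma eight_mul_measureReal_singleton_mul_sq_le (μ : Measure ℝ) [IsProbabilityMeasure μ]
    {t a z : ℝ} (h : t * a = 2 * π * z) :
    8 * μ.real {a} * (z - round z) ^ 2 ≤ ‖1 - charFun μ t‖ := by
  calc 8 * μ.real {a} * (z - round z) ^ 2 ≤ μ.real {a} * (1 - cos (t * a)) := by
        rw [mul_comm 8, mul_assoc, h]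
        gcongr
        exact eight_mul_sq_sub_round_le_one_sub_cos z
    _ ≤ ‖1 - charFun μ t‖ := measureReal_singleton_mul_one_sub_cos_le μ t a

lemma eight_mul_min_mul_sq_max_le (μ : Measure ℝ) [IsProbabilityMeasure μ]
    {t a₁ a₂ z₁ z₂ : ℝ} (h₁ : t * a₁ = 2 * π * z₁) (h₂ : t * a₂ = 2 * π * z₂) :
    8 * min (μ.real {a₁}) (μ.real {a₂}) * max |z₁ - round z₁| |z₂ - round z₂| ^ 2
      ≤ ‖1 - charFun μ t‖ := by
  rcases max_choice |z₁ - round z₁| |z₂ - round z₂| with h | h <;> rw [h, sq_abs]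
  · exact le_trans (by gcongr; exact min_le_left _ _)
      (eight_mul_measureReal_singleton_mul_sq_le μ h₁)
  · exact le_trans (by gcongr; exact min_le_right _ _)
      (eight_mul_measureReal_singleton_mul_sq_le μ h₂)

lemma le_mul_rpow_mul_max_abs_sub_round {θ c l : ℝ} (hl : 1 ≤ l)
    (hθ : ∀ (p : ℤ) (q : ℕ), 0 < q → c / (q : ℝ) ^ l ≤ |θ - p / q|) {y : ℝ} (hy : 1 / 2 ≤ y) :
    c ≤ (|θ| + 1) * (2 * y) ^ (l - 1) * max |θ * y - round (θ * y)| |y - round y| := by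
  set m := round (θ * y)
  set M := max |θ * y - m| |y - round y|
  have hround : 1 ≤ round y := by
    rw [round_eq, Int.le_floor]; push_cast; linarith
  obtain ⟨q, hq⟩ : ∃ q : ℕ, round y = q := Int.eq_ofNat_of_zero_le (by omega)
  have hq1 : (1 : ℝ) ≤ q := by exact_mod_cast hq ▸ hround
  have hq0 : (0 : ℝ) < q := by linarith
  have hq2y : (q : ℝ) ≤ 2 * y := by
    have := (abs_le.1 (abs_sub_round y)).1
    rw [hq] at this; push_cast at this; linarith
  have hM : |(θ * y - m) - θ * (y - q)| ≤ (|θ| + 1) * M := by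
    have hy' : |y - q| ≤ M := by
      rw [show (q : ℝ) = round y by exact_mod_cast hq.symm]; exact le_max_right _ _
    calc |(θ * y - m) - θ * (y - q)| ≤ |θ * y - m| + |θ| * |y - q| := by
          rw [← abs_mul]; exact abs_sub _ _
      _ ≤ M + |θ| * M := by gcongr; exact le_max_left _ _
      _ = (|θ| + 1) * M := by ring
  have happrox : c / (q : ℝ) ^ l ≤ (|θ| + 1) * M / q := by
    calc c / (q : ℝ) ^ l ≤ |θ - m / q| := hθ m q (by exact_mod_cast hq0)
      _ = |((θ * y - m) - θ * (y - q)) / q| := by congr 1; field_simp; ring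
      _ = |(θ * y - m) - θ * (y - q)| / q := by rw [abs_div, abs_of_pos hq0]
      _ ≤ (|θ| + 1) * M / q := by gcongr
  calc c = c / (q : ℝ) ^ l * (q : ℝ) ^ l := (div_mul_cancel₀ _ (by positivity)).symm
    _ ≤ (|θ| + 1) * M / q * (q : ℝ) ^ l := by gcongr
    _ = (|θ| + 1) * (q : ℝ) ^ (l - 1) * M := by rw [rpow_sub_one hq0.ne']; ring
    _ ≤ (|θ| + 1) * (2 * y) ^ (l - 1) * M := by gcongr

theorem exists_le_rpow_mul_norm_one_sub_charFun_of_atoms (μ : Measure ℝ)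
    [IsProbabilityMeasure μ] {t₁ t₂ l c : ℝ} (ht₂ : 0 < t₂) (hl : 1 ≤ l) (hc : 0 < c)
    (hθ : ∀ (p : ℤ) (q : ℕ), 0 < q → c / (q : ℝ) ^ l ≤ |t₁ / t₂ - p / q|)
    (h₁ : 0 < μ.real {t₁}) (h₂ : 0 < μ.real {t₂}) :
    ∃ ε > 0, ∃ B : ℝ, ∀ b : ℝ, B ≤ |b| → ε ≤ |b| ^ (2 * l - 2) * ‖1 - charFun μ b‖ := by
  set θ := t₁ / t₂
  set A := c / ((|θ| + 1) * (t₂ / π) ^ (l - 1))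
  refine ⟨8 * min (μ.real {t₁}) (μ.real {t₂}) * A ^ 2, by positivity, π / t₂, fun b hb ↦ ?_⟩
  set y := |b| * t₂ / (2 * π)
  have hy : 1 / 2 ≤ y := by
    rw [div_le_iff₀ ht₂] at hb
    rw [le_div_iff₀ two_pi_pos]; linarith
  set M := max |θ * y - round (θ * y)| |y - round y|
  have hA : A ≤ |b| ^ (l - 1) * M := by
    have h2y : 2 * y = |b| * (t₂ / π) := by simp only [y]; field_simp
    have := le_mul_rpow_mul_max_abs_sub_round hl hθ hy
    rw [h2y, mul_rpow (abs_nonneg b) (by positivity)] at this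
    rw [div_le_iff₀ (by positivity)]
    linarith
  have hnorm := eight_mul_min_mul_sq_max_le μ (t := |b|) (a₁ := t₁) (a₂ := t₂)
    (z₁ := θ * y) (z₂ := y) (by simp only [θ, y]; field_simp) (by simp only [y]; field_simp)
  have hpow : |b| ^ (2 * l - 2) = (|b| ^ (l - 1)) ^ 2 := by
    rw [← rpow_natCast, ← rpow_mul (abs_nonneg b)]; ring_nf
  rw [← norm_one_sub_charFun_abs, hpow]
  calc 8 * min (μ.real {t₁}) (μ.real {t₂}) * A ^ 2
      ≤ 8 * min (μ.real {t₁}) (μ.real {t₂}) * (|b| ^ (l - 1) * M) ^ 2 := by gcongr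
    _ = (|b| ^ (l - 1)) ^ 2 * (8 * min (μ.real {t₁}) (μ.real {t₂}) * M ^ 2) := by ring
    _ ≤ _ := by gcongr

theorem weakly_diophantine_of_nonLiouville_general
    (rj rk : ℝ) (hrk : rk ∈ Set.Ioo (0 : ℝ) 1)
    (l : ℝ) (hl : 2 ≤ l) (c : ℝ) (hc : 0 < c)
    (hθ : ∀ (p : ℤ) (q : ℕ), 0 < q →
      c / (q : ℝ) ^ l ≤ |Real.log rj / Real.log rk - (p : ℝ) / (q : ℝ)|)
    (pj pk : ℝ) (hpj : 0 < pj) (hpk : 0 < pk)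
    (lam : Measure ℝ) [IsProbabilityMeasure lam]
    (hatomj : lam {-Real.log rj} = ENNReal.ofReal pj)
    (hatomk : lam {-Real.log rk} = ENNReal.ofReal pk) :
    ∃ ε > 0, ∃ B : ℝ, ∀ b : ℝ, B ≤ |b| →
      ε ≤ |b| ^ (2 * l - 2) *
        ‖(1 : ℂ) - ∫ x : ℝ, Complex.exp (-(Complex.I * (b : ℂ) * (x : ℂ))) ∂lam‖ := by
  have htk : 0 < -Real.log rk := neg_pos.2 (log_neg hrk.1 hrk.2)
  have hmass {t p : ℝ} (hp : 0 < p) (h : lam {t} = ENNReal.ofReal p) : 0 < lam.real {t} := by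
    rwa [measureReal_def, h, ENNReal.toReal_ofReal hp.le]
  rw [← neg_div_neg_eq] at hθ
  obtain ⟨ε, hε, B, hB⟩ := exists_le_rpow_mul_norm_one_sub_charFun_of_atoms lam htk
    (by linarith) hc hθ (hmass hpj hatomj) (hmass hpk hatomk)
  refine ⟨ε, hε, B, fun b hb ↦ ?_⟩
  have hL : ∫ x : ℝ, Complex.exp (-(Complex.I * (b : ℂ) * (x : ℂ))) ∂lam = charFun lam (-b) := by
    rw [charFun_apply_real]; congr with x; push_cast; ring_nf
  simpa [hL] using hB (-b) (by rwa [abs_neg])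

theorem weakly_diophantine_of_nonLiouville
    (rj rk : ℝ) (hrj : rj ∈ Set.Ioo (0 : ℝ) 1) (hrk : rk ∈ Set.Ioo (0 : ℝ) 1)
    (l : ℝ) (hl : 2 ≤ l) (c : ℝ) (hc : 0 < c)
    (hθ : ∀ (p : ℤ) (q : ℕ), 0 < q →
      c / (q : ℝ) ^ l ≤ |Real.log rj / Real.log rk - (p : ℝ) / (q : ℝ)|)
    (pj pk : ℝ) (hpj : 0 < pj) (hpk : 0 < pk)
    (lam : Measure ℝ) [IsProbabilityMeasure lam]
    (hpos : lam (Set.Iic 0) = 0)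
    (hatomj : lam {-Real.log rj} = ENNReal.ofReal pj)
    (hatomk : lam {-Real.log rk} = ENNReal.ofReal pk) :
    ∃ ε > 0, ∃ B : ℝ, ∀ b : ℝ, B ≤ |b| →
      ε ≤ |b| ^ (2 * l - 2) *
        ‖(1 : ℂ) - ∫ x : ℝ, Complex.exp (-(Complex.I * (b : ℂ) * (x : ℂ))) ∂lam‖ :=
  weakly_diophantine_of_nonLiouville_general rj rk hrk l hl c hc hθ pj pk hpj hpk lam hatomj hatomk
end

section
/- For integers a, b ≥ 2, if a(a−1) = (b(b−1))^k for some rational k, then k = 1 and a = b. -/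
-- aux: (y+1)^n ≥ y^n + 2 for y ≥ 1, n ≥ 2
lemma aux_pow_gap : ∀ n, 2 ≤ n → ∀ y : ℕ, 1 ≤ y → y ^ n + 2 ≤ (y + 1) ^ n := by
  intro n hn
  induction n with
  | zero => omega
  | succ m ih =>
    intro y hy
    rcases Nat.lt_or_ge m 2 with hm | hm
    · interval_cases m
      · omega
      · ring_nf
        nlinarith
    · have := ih hm y hy
      have h1 : (y+1)^(m+1) = (y+1)^m * (y+1) := by ring
      have h2 : y^(m+1) = y^m * y := by ring
      nlinarith [pow_pos (by omega : 0 < y) m]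

-- a*(a-1) is never a perfect power with exponent ≥ 2
lemma not_perfect_power (a : ℕ) (ha : 2 ≤ a) (n : ℕ) (hn : 2 ≤ n) (c : ℕ)
    (h : a * (a - 1) = c ^ n) : False := by
  have hcop : Nat.Coprime a (a - 1) := by
    exact (Nat.coprime_self_sub_right (by omega)).mpr (Nat.coprime_one_right _)
  obtain ⟨x, hx⟩ := exists_eq_pow_of_mul_eq_pow (α := ℕ)
    (by rw [Nat.isUnit_iff]; exact hcop) h
  have h' : (a - 1) * a = c ^ n := by rw [mul_comm]; exact h
  obtain ⟨y, hy⟩ := exists_eq_pow_of_mul_eq_pow (α := ℕ)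
    (by rw [Nat.isUnit_iff]; exact hcop.symm) h'
  -- x^n = a, y^n = a - 1, so x^n = y^n + 1
  have hxy : x ^ n = y ^ n + 1 := by omega
  have hy1 : 1 ≤ y := by
    rcases Nat.eq_zero_or_pos y with h0 | h0
    · subst h0
      simp [Nat.zero_pow (by omega : 0 < n)] at hy
      omega
    · exact h0
  have hlt : y < x := by
    have : y ^ n < x ^ n := by omega
    exact lt_of_pow_lt_pow_left₀ n (Nat.zero_le _) this
  have : (y + 1) ^ n ≤ x ^ n := Nat.pow_le_pow_left (by omega) n
  have := aux_pow_gap n hn y hy1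
  omega

lemma mul_pred_inj {a b : ℕ} (ha : 2 ≤ a) (hb : 2 ≤ b)
    (h : a * (a - 1) = b * (b - 1)) : a = b := by
  rcases lt_trichotomy a b with hlt | he | hlt
  · have : a * (a-1) < b * (b-1) :=
      Nat.mul_lt_mul_of_lt_of_le hlt (by omega) (by omega)
    omega
  · exact he
  · have : b * (b-1) < a * (a-1) :=
      Nat.mul_lt_mul_of_lt_of_le hlt (by omega) (by omega)
    omega

theorem consecutive_product_rational_power
    (a b : ℕ) (ha : 2 ≤ a) (hb : 2 ≤ b) (k : ℚ)
    (h : ((a : ℝ) * ((a : ℝ) - 1)) = ((b : ℝ) * ((b : ℝ) - 1)) ^ (k : ℝ)) :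
    k = 1 ∧ a = b := by
  set A : ℕ := a * (a - 1) with hA
  set B : ℕ := b * (b - 1) with hB
  have hAcast : ((A : ℝ)) = (a : ℝ) * ((a : ℝ) - 1) := by
    rw [hA]; push_cast [Nat.cast_sub (by omega : 1 ≤ a)]; ring
  have hBcast : ((B : ℝ)) = (b : ℝ) * ((b : ℝ) - 1) := by
    rw [hB]; push_cast [Nat.cast_sub (by omega : 1 ≤ b)]; ring
  have hA2 : 2 ≤ A := by
    have : 2 * 1 ≤ a * (a - 1) := Nat.mul_le_mul ha (by omega)
    omega
  have hB2 : 2 ≤ B := by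
    have : 2 * 1 ≤ b * (b - 1) := Nat.mul_le_mul hb (by omega)
    omega
  have hreal : (A : ℝ) = (B : ℝ) ^ (k : ℝ) := by rw [hAcast, hBcast]; exact h
  have hB1R : (1 : ℝ) < (B : ℝ) := by exact_mod_cast (by omega : 1 < B)
  -- k > 0
  have hkpos : 0 < k := by
    by_contra hk
    push_neg at hk
    have : (B : ℝ) ^ (k : ℝ) ≤ 1 :=
      Real.rpow_le_one_of_one_le_of_nonpos hB1R.le (by exact_mod_cast hk)
    have hA1 : (1 : ℝ) < (A : ℝ) := by exact_mod_cast (by omega : 1 < A)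
    rw [← hreal] at this
    linarith
  set p : ℕ := k.num.toNat with hp
  set q : ℕ := k.den with hq
  have hnum : (k.num : ℚ) = (p : ℚ) := by
    rw [hp]; exact_mod_cast (Int.toNat_of_nonneg (by positivity : 0 ≤ k.num)).symm
  have hppos : 0 < p := by
    have := Rat.num_pos.mpr hkpos
    omega
  have hqpos : 0 < q := k.pos
  have hkq : (k : ℝ) * (q : ℝ) = (p : ℝ) := by
    have h1 : (k : ℝ) = (p : ℝ) / (q : ℝ) := by
      rw [← Rat.num_div_den k]
      push_cast [hnum]
      rfl
    rw [h1]
    field_simp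
  -- A^q = B^p over ℝ
  have hpow : (A : ℝ) ^ q = (B : ℝ) ^ p := by
    have : ((B : ℝ) ^ (k : ℝ)) ^ (q : ℕ) = (B : ℝ) ^ ((k : ℝ) * q) := by
      rw [← Real.rpow_natCast ((B:ℝ) ^ (k:ℝ)) q, ← Real.rpow_mul (by positivity)]
    rw [hreal, this, hkq, Real.rpow_natCast]
  have hnat : A ^ q = B ^ p := by exact_mod_cast hpow
  -- coprimality
  have hcop : Nat.Coprime q p := by
    have := k.reduced
    have hnabs : k.num.natAbs = p := by
      rw [hp]; omega
    rw [hnabs] at this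
    exact this.symm
  -- lift to ℚ and split
  have hratQ : (A : ℚ) ^ q = (B : ℚ) ^ p := by exact_mod_cast hnat
  obtain ⟨c, hcA, hcB⟩ := (pow_eq_pow_iff_of_coprime hcop).mp hratQ
  -- c is an integer
  have hcden : c.den = 1 := by
    have : ((A : ℚ)).den = c.den ^ p := by rw [hcA, Rat.den_pow]
    have hAden : ((A : ℚ)).den = 1 := Rat.den_natCast A
    rw [hAden] at this
    have hdvd : c.den ∣ 1 := by
      rw [this]
      exact dvd_pow_self _ (by omega : p ≠ 0)
    exact Nat.dvd_one.mp hdvd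
  set m : ℕ := c.num.natAbs with hm
  have hcint : (c.num : ℚ) = c := by
    conv_rhs => rw [← Rat.num_div_den c]
    rw [hcden]; simp
  have hcabs : |c| = (m : ℚ) := by
    rw [← hcint, hm]
    push_cast [Nat.cast_natAbs]
    simp
  have hmA : (m : ℚ) ^ p = (A : ℚ) := by
    rw [← hcabs, ← abs_pow, ← hcA]
    exact abs_of_nonneg (by positivity)
  have hmB : (m : ℚ) ^ q = (B : ℚ) := by
    rw [← hcabs, ← abs_pow, ← hcB]
    exact abs_of_nonneg (by positivity)
  have hmAn : m ^ p = A := by exact_mod_cast hmA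
  have hmBn : m ^ q = B := by exact_mod_cast hmB
  have hp1 : p = 1 := by
    by_contra hne
    exact not_perfect_power a ha p (by omega) m hmAn.symm
  have hq1 : q = 1 := by
    by_contra hne
    exact not_perfect_power b hb q (by omega) m hmBn.symm
  have hk1 : k = 1 := by
    have h1 : k.num = 1 := by omega
    have : k = (k.num : ℚ) / (k.den : ℚ) := (Rat.num_div_den k).symm
    have hden1 : k.den = 1 := by omega
    rw [h1, hden1] at this
    simpa using this
  refine ⟨hk1, ?_⟩
  have hAB : A = B := by
    rw [← hmAn, ← hmBn, hp1, hq1]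
  exact mul_pred_inj ha hb hAB
end
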